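/- arXiv:2210.13722 — 2 statements merged into one kernel-verified Lean document; each statement's English description precedes it below -/
import Mathlib

section
/- Let X be a type and D : X → X → ℝ be nonnegative, symmetric, and satisfy the triangle inequality. Let V be a finite subset of X, x₀ ∈ V, and k ≥ 1 with k + 1 ≤ |V|. Let x₀, x₁, …, x_k be a greedy farthest-point sequence in V: the points are pairwise distinct, each xᵢ ∈ V, and for every i with 1 ≤ i ≤ k and every y ∈ V \ {x₀, …, x_{i−1}}, min_{0 ≤ j < i} D(xᵢ, xⱼ) ≥ min_{0 ≤ j < i} D(y, xⱼ). Then for every subset S ⊆ V with x₀ ∉ S and |S| = k, the minimum pairwise distance of S ∪ {x₀} is at most 2 times the minimum pairwise distance of {x₀, x₁, …, x_k}; i.e., min over distinct a, b ∈ S ∪ {x₀} of D(a, b) ≤ 2 · min over distinct a, b ∈ {x₀, …, x_k} of D(a, b). In particular, the greedy algorithm is a 2-approximation for the anchored MaxMin dispersion problem. -/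
/-- The minimum of `D` over all unordered pairs of distinct elements of a finite set `T`. -/
noncomputable def minPairDist {X : Type*} (D : X → X → ℝ) (T : Finset X) : ℝ :=
  sInf {r : ℝ | ∃ a ∈ T, ∃ b ∈ T, a ≠ b ∧ r = D a b}

/-- Greedy farthest-point selection anchored at `x 0` is a 2-approximation for the
anchored MaxMin dispersion (B-TIPS) problem: for any set `S` of `k` candidates not
containing the anchor, the minimum pairwise distance of `S ∪ {x 0}` is at most twice
that of the greedily selected set `{x 0, x 1, …, x k}`. -/
theorem greedy_two_approximation {X : Type*} [DecidableEq X] (D : X → X → ℝ)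
    (hnn : ∀ a b, 0 ≤ D a b) (hsymm : ∀ a b, D a b = D b a)
    (htri : ∀ a b c, D a c ≤ D a b + D b c)
    (V : Finset X) (k : ℕ) (hk : 1 ≤ k) (hcard : k + 1 ≤ V.card)
    (x : ℕ → X)
    (hmem : ∀ i ≤ k, x i ∈ V)
    (hinj : ∀ i ≤ k, ∀ j ≤ k, x i = x j → i = j)
    (hgreedy : ∀ i, ∀ h1 : 1 ≤ i, i ≤ k → ∀ y ∈ V, (∀ j < i, y ≠ x j) →
      (Finset.range i).inf'
          (Finset.nonempty_range_iff.mpr (Nat.one_le_iff_ne_zero.mp h1))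
          (fun j => D y (x j)) ≤
        (Finset.range i).inf'
          (Finset.nonempty_range_iff.mpr (Nat.one_le_iff_ne_zero.mp h1))
          (fun j => D (x i) (x j)))
    (S : Finset X) (hS : S ⊆ V) (hx0 : x 0 ∉ S) (hScard : S.card = k) :
    minPairDist D (insert (x 0) S) ≤
      2 * minPairDist D ((Finset.range (k + 1)).image x) := by
  classical
  -- the greedy gains
  set g : ℕ → ℝ := fun i =>
    if h : i = 0 then 0
    else (Finset.range i).inf' (Finset.nonempty_range_iff.mpr h)
        (fun j => D (x i) (x j)) with hgdef
  have hg_le : ∀ i, i ≠ 0 → ∀ j < i, g i ≤ D (x i) (x j) := by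
    intro i hi j hj
    rw [hgdef]; simp only [dif_neg hi]
    exact Finset.inf'_le _ (Finset.mem_range.mpr hj)
  have hle_g : ∀ i, i ≠ 0 → ∀ r : ℝ, (∀ j < i, r ≤ D (x i) (x j)) → r ≤ g i := by
    intro i hi r hr
    rw [hgdef]; simp only [dif_neg hi]
    exact Finset.le_inf' _ _ fun j hj => hr j (Finset.mem_range.mp hj)
  have hg0 : ∀ i, i ≠ 0 → 0 ≤ g i := fun i hi =>
    hle_g i hi 0 fun j _ => hnn _ _
  -- one greedy step
  have hstep : ∀ i, i ≠ 0 → i < k → g (i + 1) ≤ g i := by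
    intro i hi hik
    have h1 : 1 ≤ i := Nat.one_le_iff_ne_zero.mpr hi
    have hy : ∀ j < i, x (i + 1) ≠ x j := by
      intro j hj hxeq
      have := hinj (i + 1) (by omega) j (by omega) hxeq
      omega
    have hmid : g (i + 1) ≤ (Finset.range i).inf'
        (Finset.nonempty_range_iff.mpr (Nat.one_le_iff_ne_zero.mp h1))
        (fun j => D (x (i + 1)) (x j)) := by
      apply Finset.le_inf'
      intro j hj
      exact hg_le (i + 1) (by omega) j (by have := Finset.mem_range.mp hj; omega)
    have hgr := hgreedy i h1 (le_of_lt hik) (x (i + 1)) (hmem _ (by omega)) hy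
    refine hmid.trans (hgr.trans ?_)
    rw [hgdef]; simp only [dif_neg hi]
    exact le_refl _
  -- chain of greedy steps
  have hchain : ∀ n i, i ≠ 0 → i + n ≤ k → g (i + n) ≤ g i := by
    intro n
    induction n with
    | zero => intro i hi _; simp
    | succ n ih =>
      intro i hi hik
      have h1 : g (i + n + 1) ≤ g (i + n) := hstep (i + n) (by omega) (by omega)
      have h2 : g (i + n) ≤ g i := ih i hi (by omega)
      calc g (i + (n + 1)) = g (i + n + 1) := by ring_nf
        _ ≤ g i := h1.trans h2
  have hgk : ∀ i, 1 ≤ i → i ≤ k → g k ≤ g i := by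
    intro i h1 hik
    have := hchain (k - i) i (by omega) (by omega)
    rwa [show i + (k - i) = k by omega] at this
  -- the candidate set
  set T : Finset X := insert (x 0) S with hT
  have hTV : ∀ y ∈ T, y ∈ V := by
    intro y hy
    rcases Finset.mem_insert.mp hy with h | h
    · exact h ▸ hmem 0 (by omega)
    · exact hS h
  have hTcard : T.card = k + 1 := by
    rw [hT, Finset.card_insert_of_notMem hx0, hScard]
  -- every point of V is covered: it is a center x j (j < k) or within g k of one
  have hcover : ∀ y ∈ T, ∃ j, j < k ∧ (y = x j ∨ D y (x j) ≤ g k) := by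
    intro y hy
    by_cases h : ∃ j, j < k ∧ y = x j
    · obtain ⟨j, hj, hyj⟩ := h
      exact ⟨j, hj, Or.inl hyj⟩
    · push_neg at h
      have hne : (Finset.range k).Nonempty :=
        Finset.nonempty_range_iff.mpr (Nat.one_le_iff_ne_zero.mp hk)
      have hgr := hgreedy k hk le_rfl y (hTV y hy) h
      obtain ⟨j, hj, hinf⟩ := Finset.exists_mem_eq_inf'
        (Finset.nonempty_range_iff.mpr (Nat.one_le_iff_ne_zero.mp hk))
        (fun j => D y (x j))
      refine ⟨j, Finset.mem_range.mp hj, Or.inr ?_⟩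
      have : D y (x j) ≤ (Finset.range k).inf'
          (Finset.nonempty_range_iff.mpr (Nat.one_le_iff_ne_zero.mp hk))
          (fun j => D (x k) (x j)) := hinf ▸ hgr
      refine this.trans ?_
      rw [hgdef]; simp only [dif_neg (Nat.one_le_iff_ne_zero.mp hk)]
      exact le_refl _
  choose! c hck hcP using hcover
  -- pigeonhole: two points of T share a center
  obtain ⟨a, ha, b, hb, hab, hcab⟩ :=
    Finset.exists_ne_map_eq_of_card_lt_of_maps_to
      (t := Finset.range k) (by rw [hTcard, Finset.card_range]; omega)
      (fun y hy => Finset.mem_range.mpr (hck y hy))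
  set j := c a with hj
  have hgk0 : 0 ≤ g k := hg0 k (Nat.one_le_iff_ne_zero.mp hk)
  -- the two points are at distance ≤ 2 * g k
  have hDab : D a b ≤ 2 * g k := by
    have hPa := hcP a ha
    have hPb := hcP b hb
    rw [← hcab] at hPb
    rcases hPa with ha' | ha' <;> rcases hPb with hb' | hb'
    · exact absurd (ha'.trans hb'.symm) hab
    · rw [ha', hsymm]; linarith
    · rw [hb']; linarith
    · calc D a b ≤ D a (x j) + D (x j) b := htri _ _ _
        _ = D a (x j) + D b (x j) := by rw [hsymm (x j) b]
        _ ≤ 2 * g k := by linarith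
  -- lower bound set facts
  have hbdd : ∀ (U : Finset X), BddBelow {r : ℝ | ∃ a ∈ U, ∃ b ∈ U, a ≠ b ∧ r = D a b} := by
    intro U
    exact ⟨0, fun r ⟨a, _, b, _, _, hr⟩ => hr ▸ hnn a b⟩
  -- LHS ≤ D a b ≤ 2 * g k
  have hLHS : minPairDist D T ≤ 2 * g k := by
    refine le_trans ?_ hDab
    exact csInf_le (hbdd T) ⟨a, ha, b, hb, hab, rfl⟩
  -- g k ≤ minPairDist of the greedy set
  have hRHS : g k ≤ minPairDist D ((Finset.range (k + 1)).image x) := by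
    apply le_csInf
    · refine ⟨D (x 0) (x 1), x 0, ?_, x 1, ?_, ?_, rfl⟩
      · exact Finset.mem_image.mpr ⟨0, Finset.mem_range.mpr (by omega), rfl⟩
      · exact Finset.mem_image.mpr ⟨1, Finset.mem_range.mpr (by omega), rfl⟩
      · intro h; exact absurd (hinj 0 (by omega) 1 hk h) (by omega)
    · rintro r ⟨a, ha, b, hb, hab, rfl⟩
      obtain ⟨i, hi, rfl⟩ := Finset.mem_image.mp ha
      obtain ⟨j', hj', rfl⟩ := Finset.mem_image.mp hb
      have hi' := Finset.mem_range.mp hi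
      have hj'' := Finset.mem_range.mp hj'
      have hij : i ≠ j' := fun h => hab (by rw [h])
      rcases lt_or_gt_of_ne hij with h | h
      · rw [hsymm]
        exact (hgk j' (by omega) (by omega)).trans (hg_le j' (by omega) i h)
      · exact (hgk i (by omega) (by omega)).trans (hg_le i (by omega) j' h)
  linarith
end

section
/- Let X be a type, D : X → X → ℝ symmetric, Π a finite subset of X with at least 2 elements, and C a nonempty finite set of candidates disjoint from Π. Suppose π* ∈ C satisfies min_{y ∈ Π} D(π*, y) ≥ min_{y ∈ Π} D(π, y) for all π ∈ C. Then for every π ∈ C, U(Π ∪ {π}) ≤ U(Π ∪ {π*}), where U of a finite set is the minimum of D over all unordered pairs of distinct elements of the set. In other words, selecting the candidate maximizing its minimum distance to the viewed set exactly solves the I-TIPS problem over C. -/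
/-- Correctness of the I-TIPS selection rule: if `π*` is a candidate maximizing the
minimum distance to the viewed set `Pl`, then inserting `π*` maximizes the plan
interestingness `U(Pl ∪ {π}) = minPairDist D (insert π Pl)` over all candidates `π ∈ C`. -/
theorem itips_greedy_optimal {X : Type*} [DecidableEq X] (D : X → X → ℝ)
    (hsymm : ∀ a b, D a b = D b a)
    (Pl : Finset X) (hcard : 2 ≤ Pl.card)
    (C : Finset X) (hCne : C.Nonempty) (hdisj : Disjoint C Pl)
    (πs : X) (hπs : πs ∈ C)
    (hopt : ∀ π ∈ C,
      Pl.inf' (Finset.card_pos.mp (by omega)) (fun y => D π y) ≤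
        Pl.inf' (Finset.card_pos.mp (by omega)) (fun y => D πs y)) :
    ∀ π ∈ C, minPairDist D (insert π Pl) ≤ minPairDist D (insert πs Pl) := by
  intro π hπ
  have hPlne : Pl.Nonempty := Finset.card_pos.mp (by omega)
  have hπPl : π ∉ Pl := fun h => Finset.disjoint_left.mp hdisj hπ h
  have hπsPl : πs ∉ Pl := fun h => Finset.disjoint_left.mp hdisj hπs h
  have hfin : ∀ T : Finset X, ({r : ℝ | ∃ a ∈ T, ∃ b ∈ T, a ≠ b ∧ r = D a b}).Finite := by
    intro T
    apply Set.Finite.subset (Set.Finite.image2 D T.finite_toSet T.finite_toSet)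
    rintro r ⟨a, ha, b, hb, _, rfl⟩
    exact ⟨a, ha, b, hb, rfl⟩
  have hbdd : BddBelow {r : ℝ | ∃ a ∈ insert π Pl, ∃ b ∈ insert π Pl, a ≠ b ∧ r = D a b} :=
    (hfin _).bddBelow
  obtain ⟨y₀, hy₀⟩ := id hPlne
  have hne : ({r : ℝ | ∃ a ∈ insert πs Pl, ∃ b ∈ insert πs Pl, a ≠ b ∧ r = D a b}).Nonempty :=
    ⟨D πs y₀, πs, Finset.mem_insert_self _ _, y₀, Finset.mem_insert_of_mem hy₀,
      fun h => hπsPl (h ▸ hy₀), rfl⟩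
  have key : minPairDist D (insert π Pl) ≤ Pl.inf' hPlne (fun y => D π y) := by
    obtain ⟨y, hy, hyeq⟩ := Finset.exists_mem_eq_inf' hPlne (fun y => D π y)
    rw [hyeq]
    exact csInf_le hbdd ⟨π, Finset.mem_insert_self _ _, y, Finset.mem_insert_of_mem hy,
      fun h => hπPl (h ▸ hy), rfl⟩
  unfold minPairDist
  apply le_csInf hne
  rintro r ⟨a, ha, b, hb, hab, rfl⟩
  rcases Finset.mem_insert.mp ha with rfl | haP
  · rcases Finset.mem_insert.mp hb with rfl | hbP
    · exact absurd rfl hab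
    · exact (key.trans (hopt π hπ)).trans (Finset.inf'_le _ hbP)
  · rcases Finset.mem_insert.mp hb with rfl | hbP
    · rw [hsymm a b]
      exact (key.trans (hopt π hπ)).trans (Finset.inf'_le _ haP)
    · exact csInf_le ((hfin _).bddBelow)
        ⟨a, Finset.mem_insert_of_mem haP, b, Finset.mem_insert_of_mem hbP, hab, rfl⟩
end
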